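/- arXiv:2504.03388 — 2 statements merged into one kernel-verified Lean document; each statement's English description precedes it below -/
import Mathlib

section
/- Let a, c > 0 and let π : (−π/2, π/2)² → ℝ² be as defined. Suppose Π : (−π/2, π/2)² × ℝ → ℝ² × ℝ, written Π(α, β, φ) = (Π₁(α, β, φ), Θ(α, β, φ)), satisfies: (a) Π₁(α, β, φ) = π(α, β) for all (α, β, φ); and (b) for every forward horizontal curve δ(t) = (α(t), β(t), φ(t)) on W₂ (in coordinates), the curve t ↦ Π(δ(t)) = (x(t), y(t), θ(t)) is a forward horizontal curve on M₂ (in coordinates) up to multiples of 2π in the angular component (i.e. there is a continuous r > 0 with x'(t) = r(t) cos θ(t), y'(t) = r(t) sin θ(t)). Then for every (α, β, φ) at which (π̇¹(α, β, φ), π̇²(α, β, φ)) ≠ (0, 0), the angular component satisfies Θ(α, β, φ) ≡ arg(π̇¹(α, β, φ) + i·π̇²(α, β, φ)) modulo 2π, where arg denotes the argument of a nonzero complex number. In particular, such a map Π is uniquely determined (modulo 2π in the angular component) at all such points. -/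
/-- First component of the projection map π : (−π/2, π/2)² → ℝ². -/
noncomputable def pi1 (a c α β : ℝ) : ℝ :=
  (a + c) * Real.sin α / (a + Real.cos α * Real.cos β)

/-- Second component of the projection map π : (−π/2, π/2)² → ℝ². -/
noncomputable def pi2 (a c α β : ℝ) : ℝ :=
  (a + c) * Real.cos α * Real.sin β / (a + Real.cos α * Real.cos β)

/-- π̇¹(α, β, φ) = (∂π¹/∂α) cos φ + (∂π¹/∂β) sin φ / cos α. -/
noncomputable def pidot1 (a c α β φ : ℝ) : ℝ :=
  deriv (fun s => pi1 a c s β) α * Real.cos φ +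
    deriv (fun s => pi1 a c α s) β * Real.sin φ / Real.cos α

/-- π̇²(α, β, φ) = (∂π²/∂α) cos φ + (∂π²/∂β) sin φ / cos α. -/
noncomputable def pidot2 (a c α β φ : ℝ) : ℝ :=
  deriv (fun s => pi2 a c s β) α * Real.cos φ +
    deriv (fun s => pi2 a c α s) β * Real.sin φ / Real.cos α

/-- Membership in the coordinate domain (−π/2, π/2)². -/
def InDom (α β : ℝ) : Prop :=
  α ∈ Set.Ioo (-(Real.pi / 2)) (Real.pi / 2) ∧ β ∈ Set.Ioo (-(Real.pi / 2)) (Real.pi / 2)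

/-- The C¹ curve t ↦ (α(t), β(t), φ(t)), with witness c¹, is a forward horizontal
curve on W₂ in coordinates: c¹ is continuous and positive, α' = c¹ cos φ and
β' = c¹ sin φ / cos α. -/
def IsFwdHorW2 (α β φ c1 : ℝ → ℝ) : Prop :=
  ContDiff ℝ 1 α ∧ ContDiff ℝ 1 β ∧ ContDiff ℝ 1 φ ∧
  Continuous c1 ∧ (∀ t, 0 < c1 t) ∧
  (∀ t, HasDerivAt α (c1 t * Real.cos (φ t)) t) ∧
  (∀ t, HasDerivAt β (c1 t * Real.sin (φ t) / Real.cos (α t)) t)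

/-! Through every point `(α, β, φ)` of the domain there is a forward horizontal curve with
constant angle `φ`, defined for all times and staying in `(-π/2, π/2)²`. Along it, the chain rule
gives `(x', y') = c¹ (π̇¹, π̇²)`, while condition (b) gives `(x', y') = r (cos Θ, sin Θ)` with
`r > 0`. Hence `π̇¹ + i π̇² = (r / c¹) e^{iΘ}`, whose argument is `Θ` modulo `2π`. -/

open Real

theorem exists_int_eq_arg_add_two_pi_mul {ρ θ x y : ℝ} (hρ : 0 < ρ) (hx : x = ρ * cos θ)
    (hy : y = ρ * sin θ) :
    ∃ k : ℤ, θ = Complex.arg ((x : ℂ) + (y : ℂ) * Complex.I) + 2 * π * k := by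
  have h := Complex.arg_mul_cos_add_sin_mul_I_coe_angle hρ θ
  rw [Real.Angle.cos_coe, Real.Angle.sin_coe, eq_comm, Real.Angle.angle_eq_iff_two_pi_dvd_sub] at h
  obtain ⟨k, hk⟩ := h
  have hz : (x : ℂ) + y * Complex.I = ρ * (cos θ + sin θ * Complex.I) := by
    rw [hx, hy]; push_cast; ring
  exact ⟨k, by rw [hz]; linarith⟩

theorem cos_arctan_sinh (u : ℝ) : cos (arctan (sinh u)) = (cosh u)⁻¹ := by
  rw [cos_arctan, ← cosh_sq', sqrt_sq (cosh_pos u).le, one_div]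

theorem HasDerivAt.arctan_sinh {u : ℝ → ℝ} {u' t : ℝ} (hu : HasDerivAt u u' t) :
    HasDerivAt (fun s => Real.arctan (Real.sinh (u s)))
      (u' * Real.cos (Real.arctan (Real.sinh (u t)))) t := by
  refine hu.sinh.arctan.congr_deriv ?_
  rw [cos_arctan_sinh, ← cosh_sq', pow_two]
  field_simp [(cosh_pos (u t)).ne']

theorem hasDerivAt_comp_of_differentiableAt_uncurry {𝕜 : Type*} [NontriviallyNormedField 𝕜]
    {f : 𝕜 → 𝕜 → 𝕜} {A B : 𝕜 → 𝕜} {a' b' t : 𝕜}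
    (hf : DifferentiableAt 𝕜 (Function.uncurry f) (A t, B t))
    (hA : HasDerivAt A a' t) (hB : HasDerivAt B b' t) :
    HasDerivAt (fun s => f (A s) (B s))
      (deriv (fun x => f x (B t)) (A t) * a' + deriv (fun y => f (A t) y) (B t) * b') t := by
  set L := fderiv 𝕜 (Function.uncurry f) (A t, B t)
  have hL : HasFDerivAt (Function.uncurry f) L (A t, B t) := hf.hasFDerivAt
  have partial_fst : deriv (fun x => f x (B t)) (A t) = L (1, 0) := by
    have h := hL.comp_hasDerivAt (A t)
      ((hasDerivAt_id' (A t)).prodMk (hasDerivAt_const (A t) (B t)))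
    exact h.deriv
  have partial_snd : deriv (fun y => f (A t) y) (B t) = L (0, 1) := by
    have h := hL.comp_hasDerivAt (B t)
      ((hasDerivAt_const (B t) (A t)).prodMk (hasDerivAt_id' (B t)))
    exact h.deriv
  have hlin : L (a', b') = L (1, 0) * a' + L (0, 1) * b' := by
    rw [show ((a', b') : 𝕜 × 𝕜) = a' • (1, 0) + b' • (0, 1) by simp, map_add, map_smul, map_smul,
      smul_eq_mul, smul_eq_mul, mul_comm a', mul_comm b']
  rw [partial_fst, partial_snd, ← hlin]
  exact hL.comp_hasDerivAt t (hA.prodMk hB)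

theorem add_cos_mul_cos_pos_of_inDom {a α β : ℝ} (ha : 0 < a) (h : InDom α β) :
    0 < a + cos α * cos β :=
  add_pos_of_pos_of_nonneg ha (mul_pos (cos_pos_of_mem_Ioo h.1) (cos_pos_of_mem_Ioo h.2)).le

theorem differentiableAt_uncurry_pi1 {a c α β : ℝ} (h : a + cos α * cos β ≠ 0) :
    DifferentiableAt ℝ (Function.uncurry (pi1 a c)) (α, β) := by
  unfold pi1 Function.uncurry
  fun_prop (disch := exact h)

theorem differentiableAt_uncurry_pi2 {a c α β : ℝ} (h : a + cos α * cos β ≠ 0) :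
    DifferentiableAt ℝ (Function.uncurry (pi2 a c)) (α, β) := by
  unfold pi2 Function.uncurry
  fun_prop (disch := exact h)

theorem exists_isFwdHorW2_const_angle {α β : ℝ} (h : InDom α β) (φ : ℝ) :
    ∃ A B c1 : ℝ → ℝ, IsFwdHorW2 A B (fun _ => φ) c1 ∧ (∀ t, InDom (A t) (B t)) ∧
      A 0 = α ∧ B 0 = β := by
  obtain ⟨⟨hα₁, hα₂⟩, hβ⟩ := h
  have hβ' : |β| < π / 2 := abs_lt.2 hβ
  obtain ⟨ε, hε, hεβ⟩ : ∃ ε : ℝ, 0 < ε ∧ |β| + ε * 2 = π / 2 :=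
    ⟨(π / 2 - |β|) / 2, by linarith, by ring⟩
  -- `s ↦ arctan (sinh s)` is the Gudermannian function, whose derivative is its own cosine:
  -- this solves `α' = c¹ cos φ` while staying in `(-π/2, π/2)`.
  set u : ℝ → ℝ := fun t => arsinh (tan α) + ε * cos φ * arctan t
  set A : ℝ → ℝ := fun t => arctan (sinh (u t))
  set B : ℝ → ℝ := fun t => β + ε * sin φ * arctan t
  set c1 : ℝ → ℝ := fun t => ε * cos (A t) / (1 + t ^ 2)
  have hcosA (t : ℝ) : 0 < cos (A t) := by
    simp only [A, cos_arctan_sinh]; exact inv_pos.2 (cosh_pos _)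
  have hA (t : ℝ) : HasDerivAt A (c1 t * cos φ) t := by
    refine (((hasDerivAt_arctan t).const_mul (ε * cos φ)).const_add
      (arsinh (tan α))).arctan_sinh.congr_deriv ?_
    simp only [c1]; ring
  have hB (t : ℝ) : HasDerivAt B (c1 t * sin φ / cos (A t)) t := by
    refine (((hasDerivAt_arctan t).const_mul (ε * sin φ)).const_add β).congr_deriv ?_
    simp only [c1]
    field_simp [(hcosA t).ne']
  have hAc : Continuous A := continuous_iff_continuousAt.2 fun t => (hA t).continuousAt
  have harctan := contDiff_arctan (n := 1)
  have hc1 : Continuous c1 :=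
    (continuous_const.mul (continuous_cos.comp hAc)).div (by fun_prop) fun t => by positivity
  refine ⟨A, B, c1, ⟨by fun_prop, by fun_prop, contDiff_const, hc1,
      fun t => div_pos (mul_pos hε (hcosA t)) (by positivity), hA, hB⟩,
    fun t => ⟨arctan_mem_Ioo _, abs_lt.1 ?_⟩, by simp [A, u, arctan_tan hα₁ hα₂], by simp [B]⟩
  calc |β + ε * sin φ * arctan t|
      ≤ |β| + ε * (|sin φ| * |arctan t|) :=
        (abs_add_le _ _).trans_eq (by rw [abs_mul, abs_mul, abs_of_pos hε, mul_assoc])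
    _ ≤ |β| + ε * |arctan t| := by
        gcongr; exact mul_le_of_le_one_left (abs_nonneg _) (abs_sin_le_one φ)
    _ < |β| + ε * 2 := by gcongr; linarith [abs_lt.2 (arctan_mem_Ioo t), pi_le_four]
    _ = π / 2 := hεβ

theorem IsFwdHorW2.hasDerivAt_comp {A B Φ c1 : ℝ → ℝ} {f : ℝ → ℝ → ℝ}
    (hγ : IsFwdHorW2 A B Φ c1) (t : ℝ)
    (hf : DifferentiableAt ℝ (Function.uncurry f) (A t, B t)) :
    HasDerivAt (fun s => f (A s) (B s))
      (c1 t * (deriv (fun x => f x (B t)) (A t) * cos (Φ t) +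
        deriv (fun y => f (A t) y) (B t) * sin (Φ t) / cos (A t))) t := by
  obtain ⟨-, -, -, -, -, hA, hB⟩ := hγ
  refine (hasDerivAt_comp_of_differentiableAt_uncurry hf (hA t) (hB t)).congr_deriv ?_
  ring

theorem stmt0_general (a c : ℝ) (ha : 0 < a)
    (Px Py Θ : ℝ → ℝ → ℝ → ℝ)
    -- (a): the spatial component of Π equals π
    (hspatial : ∀ α β φ : ℝ, InDom α β →
      Px α β φ = pi1 a c α β ∧ Py α β φ = pi2 a c α β)
    -- (b): Π maps forward horizontal curves on W₂ to forward horizontal curves on M₂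
    (hhor : ∀ α β φ c1 : ℝ → ℝ, IsFwdHorW2 α β φ c1 → (∀ t, InDom (α t) (β t)) →
      ∃ r : ℝ → ℝ, Continuous r ∧ (∀ t, 0 < r t) ∧
        (∀ t, HasDerivAt (fun s => Px (α s) (β s) (φ s))
          (r t * Real.cos (Θ (α t) (β t) (φ t))) t) ∧
        (∀ t, HasDerivAt (fun s => Py (α s) (β s) (φ s))
          (r t * Real.sin (Θ (α t) (β t) (φ t))) t))
    (α β φ : ℝ) (hdom : InDom α β) :
    ∃ k : ℤ, Θ α β φ =
      Complex.arg ((pidot1 a c α β φ : ℂ) + (pidot2 a c α β φ : ℂ) * Complex.I) +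
        2 * Real.pi * k := by
  obtain ⟨A, B, c1, hγ, hdomγ, rfl, rfl⟩ := exists_isFwdHorW2_const_angle hdom φ
  obtain ⟨r, -, hr, hx, hy⟩ := hhor A B (fun _ => φ) c1 hγ hdomγ
  have hden := (add_cos_mul_cos_pos_of_inDom ha hdom).ne'
  have hc1 : 0 < c1 0 := hγ.2.2.2.2.1 0
  have hPx : (fun s => Px (A s) (B s) φ) = fun s => pi1 a c (A s) (B s) :=
    funext fun s => (hspatial _ _ _ (hdomγ s)).1
  have hPy : (fun s => Py (A s) (B s) φ) = fun s => pi2 a c (A s) (B s) :=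
    funext fun s => (hspatial _ _ _ (hdomγ s)).2
  have h₁ : r 0 * cos (Θ (A 0) (B 0) φ) = c1 0 * pidot1 a c (A 0) (B 0) φ :=
    (hPx ▸ hx 0).unique (hγ.hasDerivAt_comp 0 (differentiableAt_uncurry_pi1 hden))
  have h₂ : r 0 * sin (Θ (A 0) (B 0) φ) = c1 0 * pidot2 a c (A 0) (B 0) φ :=
    (hPy ▸ hy 0).unique (hγ.hasDerivAt_comp 0 (differentiableAt_uncurry_pi2 hden))
  refine exists_int_eq_arg_add_two_pi_mul (div_pos (hr 0) hc1) ?_ ?_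
  · field_simp; linarith
  · field_simp; linarith

/-- Uniqueness of the lifted map Π = (Px, Py, Θ): if (a) the spatial components of Π
are the components of π, and (b) Π maps every forward horizontal curve on W₂ to a
forward horizontal curve on M₂ (up to multiples of 2π in the angular component, i.e.
there is a continuous r > 0 with x' = r cos θ, y' = r sin θ), then wherever
(π̇¹, π̇²) ≠ (0, 0) the angular component satisfies
Θ(α, β, φ) ≡ arg(π̇¹ + i π̇²) (mod 2π). -/
theorem stmt0 (a c : ℝ) (ha : 0 < a) (hc : 0 < c)
    (Px Py Θ : ℝ → ℝ → ℝ → ℝ)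
    -- (a): the spatial component of Π equals π
    (hspatial : ∀ α β φ : ℝ, InDom α β →
      Px α β φ = pi1 a c α β ∧ Py α β φ = pi2 a c α β)
    -- (b): Π maps forward horizontal curves on W₂ to forward horizontal curves on M₂
    (hhor : ∀ α β φ c1 : ℝ → ℝ, IsFwdHorW2 α β φ c1 → (∀ t, InDom (α t) (β t)) →
      ∃ r : ℝ → ℝ, Continuous r ∧ (∀ t, 0 < r t) ∧
        (∀ t, HasDerivAt (fun s => Px (α s) (β s) (φ s))
          (r t * Real.cos (Θ (α t) (β t) (φ t))) t) ∧
        (∀ t, HasDerivAt (fun s => Py (α s) (β s) (φ s))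
          (r t * Real.sin (Θ (α t) (β t) (φ t))) t))
    (α β φ : ℝ) (hdom : InDom α β)
    (hne : (pidot1 a c α β φ, pidot2 a c α β φ) ≠ (0, 0)) :
    ∃ k : ℤ, Θ α β φ =
      Complex.arg ((pidot1 a c α β φ : ℂ) + (pidot2 a c α β φ : ℂ) * Complex.I) +
        2 * Real.pi * k :=
  stmt0_general a c ha Px Py Θ hspatial hhor α β φ hdom
end

section
/- Let a, c > 0 and let π : (−π/2, π/2)² → ℝ² be as defined, and assume (π̇¹(α, β, φ), π̇²(α, β, φ)) ≠ (0, 0) for all (α, β, φ) in (−π/2, π/2)² × ℝ. Define Π(α, β, φ) := (π(α, β), arg(π̇¹(α, β, φ) + i·π̇²(α, β, φ))). Then: (a) the spatial component of Π(α, β, φ) equals π(α, β); and (b) for every forward horizontal curve δ(t) = (α(t), β(t), φ(t)) on W₂ (in coordinates), the curve t ↦ Π(δ(t)) = (x(t), y(t), θ(t)) satisfies x'(t) = r(t) cos θ(t) and y'(t) = r(t) sin θ(t) for the positive continuous function r(t) = c¹(t) · |(π̇¹, π̇²)(α(t), β(t), φ(t))|, i.e. Π maps forward horizontal curves on W₂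 to forward horizontal curves on M₂. -/
/-- The complex number π̇¹ + i·π̇². -/
noncomputable def pidotC (a c α β φ : ℝ) : ℂ :=
  (pidot1 a c α β φ : ℂ) + (pidot2 a c α β φ : ℂ) * Complex.I

/-- The map Π(α, β, φ) := (π(α, β), arg(π̇¹ + i·π̇²)). -/
noncomputable def PiMap (a c α β φ : ℝ) : (ℝ × ℝ) × ℝ :=
  ((pi1 a c α β, pi2 a c α β), Complex.arg (pidotC a c α β φ))

/-!
`π̇ⁱ(α, β, φ)` is the differential of `πⁱ` applied to the horizontal frame vector
`cos φ ∂_α + (sin φ / cos α) ∂_β` of `W₂`, so along a forward horizontal curve the chain rule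
gives `(πⁱ ∘ δ)' = c¹ π̇ⁱ`. Writing `π̇¹ + i π̇² = |π̇| e^{iθ}` with `θ` its argument turns this into
`x' = c¹ |π̇| cos θ` and `y' = c¹ |π̇| sin θ`. Continuity of `r = c¹ |π̇|` holds because `π` is
smooth where `a + cos α cos β ≠ 0`, so its partial derivatives are continuous along the curve.
-/

open Real Function

/-- `pidot1 a c` and `pidot2 a c` are definitionally `horizDeriv (pi1 a c)` and
`horizDeriv (pi2 a c)`. -/
noncomputable def horizDeriv (g : ℝ → ℝ → ℝ) (α β φ : ℝ) : ℝ :=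
  deriv (fun s => g s β) α * cos φ + deriv (fun s => g α s) β * sin φ / cos α

section HorizontalFrame

variable {g : ℝ → ℝ → ℝ}

theorem deriv_left_eq_fderiv_uncurry {x y : ℝ} (hg : DifferentiableAt ℝ (uncurry g) (x, y)) :
    deriv (fun s => g s y) x = fderiv ℝ (uncurry g) (x, y) (1, 0) := by
  have h := hg.hasFDerivAt.comp_hasDerivAt x ((hasDerivAt_id' x).prodMk (hasDerivAt_const x y))
  exact h.deriv

theorem deriv_right_eq_fderiv_uncurry {x y : ℝ} (hg : DifferentiableAt ℝ (uncurry g) (x, y)) :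
    deriv (fun s => g x s) y = fderiv ℝ (uncurry g) (x, y) (0, 1) := by
  have h := hg.hasFDerivAt.comp_hasDerivAt y ((hasDerivAt_const y x).prodMk (hasDerivAt_id' y))
  exact h.deriv

theorem horizDeriv_eq_fderiv {x y φ : ℝ} (hg : DifferentiableAt ℝ (uncurry g) (x, y)) :
    horizDeriv g x y φ = fderiv ℝ (uncurry g) (x, y) (cos φ, sin φ / cos x) := by
  have hv : ((cos φ, sin φ / cos x) : ℝ × ℝ) = cos φ • (1, 0) + (sin φ / cos x) • (0, 1) := by
    ext <;> simp
  rw [horizDeriv, deriv_left_eq_fderiv_uncurry hg, deriv_right_eq_fderiv_uncurry hg, hv, map_add,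
    map_smul, map_smul, smul_eq_mul, smul_eq_mul]
  ring

theorem hasDerivAt_comp_of_horizontal {α β φ : ℝ → ℝ} {r t : ℝ}
    (hg : DifferentiableAt ℝ (uncurry g) (α t, β t))
    (hα : HasDerivAt α (r * cos (φ t)) t) (hβ : HasDerivAt β (r * sin (φ t) / cos (α t)) t) :
    HasDerivAt (fun s => g (α s) (β s)) (r * horizDeriv g (α t) (β t) (φ t)) t := by
  have hv : ((r * cos (φ t), r * sin (φ t) / cos (α t)) : ℝ × ℝ) =
      r • (cos (φ t), sin (φ t) / cos (α t)) := by
    ext <;> simp [mul_div_assoc]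
  rw [horizDeriv_eq_fderiv hg, ← smul_eq_mul, ← map_smul, ← hv]
  exact hg.hasFDerivAt.comp_hasDerivAt t (hα.prodMk hβ)

theorem continuous_horizDeriv_comp {U : Set (ℝ × ℝ)} {α β φ : ℝ → ℝ}
    (hg : ContDiffOn ℝ 1 (uncurry g) U) (hU : IsOpen U)
    (hα : Continuous α) (hβ : Continuous β) (hφ : Continuous φ)
    (hmem : ∀ t, (α t, β t) ∈ U) (hcos : ∀ t, cos (α t) ≠ 0) :
    Continuous fun t => horizDeriv g (α t) (β t) (φ t) := by
  have hdiff : ∀ t, DifferentiableAt ℝ (uncurry g) (α t, β t) := fun t =>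
    (hg.differentiableOn one_ne_zero).differentiableAt (hU.mem_nhds (hmem t))
  simp_rw [horizDeriv_eq_fderiv (hdiff _)]
  have hfd : Continuous fun t => fderiv ℝ (uncurry g) (α t, β t) :=
    (hg.continuousOn_fderiv_of_isOpen hU le_rfl).comp_continuous (hα.prodMk hβ) hmem
  exact hfd.clm_apply ((continuous_cos.comp hφ).prodMk
    ((continuous_sin.comp hφ).div (continuous_cos.comp hα) hcos))

end HorizontalFrame

theorem isOpen_setOf_add_cos_mul_cos_ne_zero (a : ℝ) :
    IsOpen {p : ℝ × ℝ | a + cos p.1 * cos p.2 ≠ 0} :=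
  isOpen_ne_fun (by fun_prop) continuous_const

theorem contDiffOn_uncurry_pi1 (a c : ℝ) {n : WithTop ℕ∞} :
    ContDiffOn ℝ n (uncurry (pi1 a c)) {p | a + cos p.1 * cos p.2 ≠ 0} := by
  change ContDiffOn ℝ n (fun p : ℝ × ℝ => (a + c) * sin p.1 / (a + cos p.1 * cos p.2)) _
  exact ContDiffOn.div (by fun_prop) (by fun_prop) fun _ hp => hp

theorem contDiffOn_uncurry_pi2 (a c : ℝ) {n : WithTop ℕ∞} :
    ContDiffOn ℝ n (uncurry (pi2 a c)) {p | a + cos p.1 * cos p.2 ≠ 0} := by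
  change ContDiffOn ℝ n
    (fun p : ℝ × ℝ => (a + c) * cos p.1 * sin p.2 / (a + cos p.1 * cos p.2)) _
  exact ContDiffOn.div (by fun_prop) (by fun_prop) fun _ hp => hp

theorem InDom.cos_fst_pos {α β : ℝ} (h : InDom α β) : 0 < cos α :=
  cos_pos_of_mem_Ioo h.1

theorem InDom.add_cos_mul_cos_pos {a α β : ℝ} (ha : 0 ≤ a) (h : InDom α β) :
    0 < a + cos α * cos β :=
  add_pos_of_nonneg_of_pos ha (mul_pos h.cos_fst_pos (cos_pos_of_mem_Ioo h.2))

@[simp] theorem re_pidotC (a c α β φ : ℝ) : (pidotC a c α β φ).re = pidot1 a c α β φ := by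
  simp [pidotC]

@[simp] theorem im_pidotC (a c α β φ : ℝ) : (pidotC a c α β φ).im = pidot2 a c α β φ := by
  simp [pidotC]

theorem pidotC_ne_zero {a c α β φ : ℝ} (h : (pidot1 a c α β φ, pidot2 a c α β φ) ≠ (0, 0)) :
    pidotC a c α β φ ≠ 0 := by
  contrapose! h
  simp [← re_pidotC, ← im_pidotC, h]

theorem stmt1_general (a c : ℝ) (ha : 0 < a)
    (hne : ∀ α β φ : ℝ, InDom α β →
      (pidot1 a c α β φ, pidot2 a c α β φ) ≠ (0, 0)) :
    -- (a): the spatial component of Π equals π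
    (∀ α β φ : ℝ, (PiMap a c α β φ).1 = (pi1 a c α β, pi2 a c α β)) ∧
    -- (b): Π maps forward horizontal curves on W₂ to forward horizontal curves on M₂
    (∀ α β φ c1 : ℝ → ℝ, IsFwdHorW2 α β φ c1 → (∀ t, InDom (α t) (β t)) →
      (Continuous fun t => c1 t * ‖pidotC a c (α t) (β t) (φ t)‖) ∧
      (∀ t, 0 < c1 t * ‖pidotC a c (α t) (β t) (φ t)‖) ∧
      (∀ t, HasDerivAt (fun s => (PiMap a c (α s) (β s) (φ s)).1.1)
        (c1 t * ‖pidotC a c (α t) (β t) (φ t)‖ *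
          Real.cos ((PiMap a c (α t) (β t) (φ t)).2)) t) ∧
      (∀ t, HasDerivAt (fun s => (PiMap a c (α s) (β s) (φ s)).1.2)
        (c1 t * ‖pidotC a c (α t) (β t) (φ t)‖ *
          Real.sin ((PiMap a c (α t) (β t) (φ t)).2)) t)) := by
  refine ⟨fun _ _ _ => rfl, ?_⟩
  rintro α β φ c1 ⟨hα, hβ, hφ, hc1, hc1_pos, hα', hβ'⟩ hdom
  set U : Set (ℝ × ℝ) := {p | a + cos p.1 * cos p.2 ≠ 0}
  have hU : IsOpen U := isOpen_setOf_add_cos_mul_cos_ne_zero a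
  have hmem : ∀ t, (α t, β t) ∈ U := fun t => ((hdom t).add_cos_mul_cos_pos ha.le).ne'
  have hcos : ∀ t, cos (α t) ≠ 0 := fun t => (hdom t).cos_fst_pos.ne'
  have hdiff {g : ℝ → ℝ → ℝ} (hg : ContDiffOn ℝ 1 (uncurry g) U) (t : ℝ) :=
    (hg.differentiableOn one_ne_zero).differentiableAt (hU.mem_nhds (hmem t))
  have hcont {g : ℝ → ℝ → ℝ} (hg : ContDiffOn ℝ 1 (uncurry g) U) :=
    continuous_horizDeriv_comp hg hU hα.continuous hβ.continuous hφ.continuous hmem hcos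
  have hpidotC : Continuous fun t => pidotC a c (α t) (β t) (φ t) := by
    have h1 : Continuous fun t => pidot1 a c (α t) (β t) (φ t) :=
      hcont (contDiffOn_uncurry_pi1 a c)
    have h2 : Continuous fun t => pidot2 a c (α t) (β t) (φ t) :=
      hcont (contDiffOn_uncurry_pi2 a c)
    unfold pidotC
    fun_prop
  refine ⟨hc1.mul hpidotC.norm, fun t => mul_pos (hc1_pos t)
    (norm_pos_iff.2 (pidotC_ne_zero (hne _ _ _ (hdom t)))), fun t => ?_, fun t => ?_⟩
  · rw [mul_assoc, PiMap, Complex.norm_mul_cos_arg, re_pidotC]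
    exact hasDerivAt_comp_of_horizontal (hdiff (contDiffOn_uncurry_pi1 a c) t) (hα' t) (hβ' t)
  · rw [mul_assoc, PiMap, Complex.norm_mul_sin_arg, im_pidotC]
    exact hasDerivAt_comp_of_horizontal (hdiff (contDiffOn_uncurry_pi2 a c) t) (hα' t) (hβ' t)

/-- The map Π(α, β, φ) := (π(α, β), arg(π̇¹ + i·π̇²)) satisfies:
(a) its spatial component equals π(α, β); and (b) it maps forward horizontal curves
on W₂ to forward horizontal curves on M₂, with the positive continuous function
r(t) = c¹(t)·|(π̇¹, π̇²)(α(t), β(t), φ(t))|. -/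
theorem stmt1 (a c : ℝ) (ha : 0 < a) (hc : 0 < c)
    (hne : ∀ α β φ : ℝ, InDom α β →
      (pidot1 a c α β φ, pidot2 a c α β φ) ≠ (0, 0)) :
    -- (a): the spatial component of Π equals π
    (∀ α β φ : ℝ, (PiMap a c α β φ).1 = (pi1 a c α β, pi2 a c α β)) ∧
    -- (b): Π maps forward horizontal curves on W₂ to forward horizontal curves on M₂
    (∀ α β φ c1 : ℝ → ℝ, IsFwdHorW2 α β φ c1 → (∀ t, InDom (α t) (β t)) →
      (Continuous fun t => c1 t * ‖pidotC a c (α t) (β t) (φ t)‖) ∧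
      (∀ t, 0 < c1 t * ‖pidotC a c (α t) (β t) (φ t)‖) ∧
      (∀ t, HasDerivAt (fun s => (PiMap a c (α s) (β s) (φ s)).1.1)
        (c1 t * ‖pidotC a c (α t) (β t) (φ t)‖ *
          Real.cos ((PiMap a c (α t) (β t) (φ t)).2)) t) ∧
      (∀ t, HasDerivAt (fun s => (PiMap a c (α s) (β s) (φ s)).1.2)
        (c1 t * ‖pidotC a c (α t) (β t) (φ t)‖ *
          Real.sin ((PiMap a c (α t) (β t) (φ t)).2)) t)) :=
  stmt1_general a c ha hne
end
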